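/- arXiv:1907.04803 — 2 statements merged into one kernel-verified Lean document; each statement's English description precedes it below -/
import Mathlib

section
/- For |q|<1 and |x|<1, the series identity ∑_{j≥0} (xq;q)_j x^{j+1} q^{j+1} = ∑_{m≥1} (-1)^{m-1} q^{m(3m-1)/2} x^{3m-2} (1 + x q^m) holds, where (a;q)_j = ∏_{i=0}^{j-1}(1-a q^i). -/
/-!
Write `F(y) = ∑_{j ≥ 0} (yq;q)_j y^{j+1} q^{j+1}`. Peeling off the first factor of `(yq;q)_{j+1}`
and the last factor of `(yq²;q)_{j+1}` makes the series telescope, giving the functional equation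
`F(y) = qy(1 + yq) - y³q³ F(yq)`. Iterating it `M` times yields the first `M` terms of the right-hand
side plus a remainder `± x^{3M} q^{3M(M+1)/2} F(xq^M)`; since `F` is bounded on the closed unit disc,
the remainder tends to zero.
-/

open Finset

noncomputable def qPoch (a q : ℂ) (n : ℕ) : ℂ := ∏ i ∈ Finset.range n, (1 - a * q ^ i)

noncomputable def qInf (q : ℂ) : ℂ := ∏' i : ℕ, (1 - q ^ (i + 1))

def zsgn (m : ℤ) : ℤ := if 0 ≤ m then 1 else -1

open Filter Topology

lemma qPoch_zero (a q : ℂ) : qPoch a q 0 = 1 := by simp [qPoch]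

lemma qPoch_succ (a q : ℂ) (n : ℕ) : qPoch a q (n + 1) = qPoch a q n * (1 - a * q ^ n) :=
  prod_range_succ _ _

lemma qPoch_succ' (a q : ℂ) (n : ℕ) : qPoch a q (n + 1) = (1 - a) * qPoch (a * q) q n := by
  simp only [qPoch, prod_range_succ', pow_zero, mul_one, mul_assoc, ← pow_succ']
  ring

lemma norm_qPoch_le {a q : ℂ} (ha : ‖a‖ ≤ 1) (hq : ‖q‖ < 1) (n : ℕ) :
    ‖qPoch a q n‖ ≤ Real.exp (1 - ‖q‖)⁻¹ := by
  have hfactor (i : ℕ) : ‖1 - a * q ^ i‖ ≤ Real.exp (‖q‖ ^ i) := calc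
    ‖1 - a * q ^ i‖ ≤ 1 + ‖a‖ * ‖q‖ ^ i := by
      simpa only [norm_one, norm_mul, norm_pow] using norm_sub_le (1 : ℂ) (a * q ^ i)
    _ ≤ ‖q‖ ^ i + 1 := by grw [ha, one_mul, add_comm]
    _ ≤ Real.exp (‖q‖ ^ i) := Real.add_one_le_exp _
  have hgeom := summable_geometric_of_lt_one (norm_nonneg q) hq
  calc ‖qPoch a q n‖ ≤ ∏ i ∈ range n, Real.exp (‖q‖ ^ i) := by
        rw [qPoch, norm_prod]
        exact prod_le_prod (fun _ _ ↦ norm_nonneg _) fun i _ ↦ hfactor i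
    _ = Real.exp (∑ i ∈ range n, ‖q‖ ^ i) := (Real.exp_sum _ _).symm
    _ ≤ Real.exp (1 - ‖q‖)⁻¹ := by
        rw [Real.exp_le_exp, ← tsum_geometric_of_lt_one (norm_nonneg q) hq]
        exact hgeom.sum_le_tsum _ fun i _ ↦ by positivity

noncomputable def qPochTerm (q y : ℂ) (j : ℕ) : ℂ := qPoch (y * q) q j * y ^ (j + 1) * q ^ (j + 1)

noncomputable def qPochSeries (q y : ℂ) : ℂ := ∑' j, qPochTerm q y j

section Bounds

variable {q y : ℂ}

lemma norm_mul_le_one (hq : ‖q‖ < 1) (hy : ‖y‖ ≤ 1) : ‖y * q‖ ≤ 1 := by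
  rw [norm_mul]; exact mul_le_one₀ hy (norm_nonneg q) hq.le

lemma norm_mul_pow_le_one (hq : ‖q‖ < 1) (hy : ‖y‖ ≤ 1) (n : ℕ) : ‖y * q ^ n‖ ≤ 1 := by
  rw [norm_mul, norm_pow]; exact mul_le_one₀ hy (by positivity) (pow_le_one₀ (by positivity) hq.le)

lemma norm_qPochTerm_le (hq : ‖q‖ < 1) (hy : ‖y‖ ≤ 1) (j : ℕ) :
    ‖qPochTerm q y j‖ ≤ Real.exp (1 - ‖q‖)⁻¹ * ‖q‖ ^ j := by
  rw [qPochTerm, norm_mul, norm_mul, norm_pow, norm_pow]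
  grw [norm_qPoch_le (norm_mul_le_one hq hy) hq j, hy, one_pow, mul_one,
    pow_le_pow_of_le_one (norm_nonneg q) hq.le j.le_succ]

lemma summable_qPochTerm (hq : ‖q‖ < 1) (hy : ‖y‖ ≤ 1) : Summable (qPochTerm q y) :=
  .of_norm_bounded ((summable_geometric_of_lt_one (norm_nonneg q) hq).mul_left _)
    (norm_qPochTerm_le hq hy)

lemma norm_qPochSeries_le (hq : ‖q‖ < 1) (hy : ‖y‖ ≤ 1) :
    ‖qPochSeries q y‖ ≤ Real.exp (1 - ‖q‖)⁻¹ * (1 - ‖q‖)⁻¹ :=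
  tsum_of_norm_bounded ((hasSum_geometric_of_lt_one (norm_nonneg q) hq).mul_left _)
    (norm_qPochTerm_le hq hy)

end Bounds

noncomputable def qPochTelescope (q y : ℂ) (j : ℕ) : ℂ :=
  y ^ (j + 2) * q ^ (j + 2) * qPoch (y * q * q) q j * (1 - y ^ 2 * q ^ (j + 3))

lemma qPochTerm_succ_add_eq (q y : ℂ) (j : ℕ) :
    qPochTerm q y (j + 1) + y ^ 3 * q ^ 3 * qPochTerm q (y * q) (j + 1)
      = qPochTelescope q y j - qPochTelescope q y (j + 1) := by
  simp only [qPochTerm, qPochTelescope]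
  rw [qPoch_succ' (y * q) q j, qPoch_succ (y * q * q) q j]
  ring

section FunctionalEquation

variable {q y : ℂ}

lemma summable_qPochTelescope (hq : ‖q‖ < 1) (hy : ‖y‖ ≤ 1) : Summable (qPochTelescope q y) := by
  refine .of_norm_bounded ((summable_geometric_of_lt_one (norm_nonneg q) hq).mul_left
    (2 * Real.exp (1 - ‖q‖)⁻¹)) fun j ↦ ?_
  have hyq : ‖y * q * q‖ ≤ 1 := norm_mul_le_one hq (norm_mul_le_one hq hy)
  have hlast : ‖1 - y ^ 2 * q ^ (j + 3)‖ ≤ 2 := by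
    refine (norm_sub_le _ _).trans ?_
    rw [norm_one, norm_mul, norm_pow, norm_pow]
    grw [hy, hq.le, one_pow, one_pow]
    norm_num
  rw [qPochTelescope, norm_mul, norm_mul, norm_mul, norm_pow, norm_pow]
  grw [hlast, norm_qPoch_le hyq hq j, hy, one_pow, one_mul,
    pow_le_pow_of_le_one (norm_nonneg q) hq.le (show j ≤ j + 2 by omega)]
  linarith

lemma qPochSeries_eq (hq : ‖q‖ < 1) (hy : ‖y‖ ≤ 1) :
    qPochSeries q y = q * y * (1 + y * q) - y ^ 3 * q ^ 3 * qPochSeries q (y * q) := by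
  have hc := summable_qPochTerm hq hy
  have hd := (summable_qPochTerm hq (norm_mul_le_one hq hy)).mul_left (y ^ 3 * q ^ 3)
  have he := summable_qPochTelescope hq hy
  have htail : ∑' j, (qPochTerm q y (j + 1) + y ^ 3 * q ^ 3 * qPochTerm q (y * q) (j + 1))
      = qPochTelescope q y 0 := by
    simp_rw [qPochTerm_succ_add_eq]
    rw [he.tsum_sub ((summable_nat_add_iff 1).mpr he), he.tsum_eq_zero_add, add_sub_cancel_right]
  have hsum : qPochSeries q y + y ^ 3 * q ^ 3 * qPochSeries q (y * q) = q * y * (1 + y * q) := by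
    rw [qPochSeries, qPochSeries, ← tsum_mul_left, ← hc.tsum_add hd,
      (hc.add hd).tsum_eq_zero_add, htail]
    simp only [qPochTerm, qPochTelescope, qPoch_zero]
    ring
  rw [← hsum]
  ring

end FunctionalEquation

noncomputable def pentagonalTerm (q x : ℂ) (m : ℕ) : ℂ :=
  (-1 : ℂ) ^ m * q ^ (((m + 1) * (3 * m + 2)) / 2) * x ^ (3 * m + 1) * (1 + x * q ^ (m + 1))

lemma pentagonal_exponent_eq (m : ℕ) :
    ((m + 1) * (3 * m + 2)) / 2 = 3 * (m + 1).choose 2 + m + 1 := by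
  have h := Nat.add_one_mul_choose_eq m 1
  rw [Nat.choose_one_right] at h
  refine Nat.div_eq_of_eq_mul_left two_pos ?_
  linarith

section Iteration

variable {q x : ℂ}

lemma summable_pentagonalTerm (hq : ‖q‖ < 1) (hx : ‖x‖ < 1) : Summable (pentagonalTerm q x) := by
  refine .of_norm_bounded ((summable_geometric_of_lt_one (norm_nonneg x) hx).mul_left 2)
    fun m ↦ ?_
  have hlast : ‖1 + x * q ^ (m + 1)‖ ≤ 2 := by
    refine (norm_add_le _ _).trans ?_
    rw [norm_one, norm_mul, norm_pow]
    grw [hx.le, hq.le, one_pow]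
    norm_num
  rw [pentagonalTerm, norm_mul, norm_mul, norm_mul, norm_pow, norm_pow, norm_pow, norm_neg,
    norm_one, one_pow, one_mul]
  grw [hlast, hq.le, one_pow, one_mul,
    pow_le_pow_of_le_one (norm_nonneg x) hx.le (show m ≤ 3 * m + 1 by omega)]
  linarith

lemma qPochSeries_eq_sum_add (hq : ‖q‖ < 1) (hx : ‖x‖ ≤ 1) (M : ℕ) :
    qPochSeries q x = ∑ m ∈ range M, pentagonalTerm q x m
      + (-1) ^ M * x ^ (3 * M) * q ^ (3 * (M + 1).choose 2) * qPochSeries q (x * q ^ M) := by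
  induction M with
  | zero => simp
  | succ M ih =>
    rw [ih, qPochSeries_eq hq (norm_mul_pow_le_one hq hx M), sum_range_succ, pentagonalTerm,
      pentagonal_exponent_eq, Nat.choose_succ_succ' (M + 1), Nat.choose_one_right, mul_assoc x,
      ← pow_succ]
    ring

lemma tendsto_remainder (hq : ‖q‖ < 1) (hx : ‖x‖ < 1) :
    Tendsto (fun M : ℕ ↦ (-1) ^ M * x ^ (3 * M) * q ^ (3 * (M + 1).choose 2)
      * qPochSeries q (x * q ^ M)) atTop (𝓝 0) := by
  have hdecay := (tendsto_pow_atTop_nhds_zero_of_lt_one (by positivity)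
    (pow_lt_one₀ (norm_nonneg x) hx three_ne_zero)).mul_const
    (Real.exp (1 - ‖q‖)⁻¹ * (1 - ‖q‖)⁻¹)
  rw [zero_mul] at hdecay
  refine squeeze_zero_norm (fun M ↦ ?_) hdecay
  rw [norm_mul, norm_mul, norm_mul, norm_pow, norm_pow, norm_pow, norm_neg, norm_one, one_pow,
    one_mul, pow_mul]
  have hB : 0 ≤ Real.exp (1 - ‖q‖)⁻¹ * (1 - ‖q‖)⁻¹ :=
    mul_nonneg (Real.exp_nonneg _) (inv_nonneg.mpr (sub_nonneg.mpr hq.le))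
  grw [norm_qPochSeries_le hq (norm_mul_pow_le_one hq hx.le M), hq.le, one_pow, mul_one]

end Iteration

theorem stmt0 (q x : ℂ) (hq : ‖q‖ < 1) (hx : ‖x‖ < 1) :
    ∑' j : ℕ, qPoch (x * q) q j * x ^ (j + 1) * q ^ (j + 1)
      = ∑' m : ℕ, (-1 : ℂ) ^ m * q ^ (((m + 1) * (3 * m + 2)) / 2) * x ^ (3 * m + 1)
          * (1 + x * q ^ (m + 1)) := by
  change qPochSeries q x = ∑' m, pentagonalTerm q x m
  have hpartial : Tendsto (fun M ↦ ∑ m ∈ range M, pentagonalTerm q x m) atTop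
      (𝓝 (qPochSeries q x)) := by
    have h := tendsto_const_nhds (x := qPochSeries q x) |>.sub (tendsto_remainder hq hx)
    rw [sub_zero] at h
    refine h.congr fun M ↦ ?_
    rw [qPochSeries_eq_sum_add hq hx.le M, add_sub_cancel_right]
  exact ((summable_pentagonalTerm hq hx).hasSum_iff_tendsto_nat.mpr hpartial).tsum_eq.symm
end

section
/- The pair β_n = q^{n²}/(q²;q)_{2n}, with α_{3m-1} = q^{3m²+m}, α_{3m} = q^{3m²-m}, α_{3m+1} = -q^{3m²+m} - q^{3m²+5m+2}, is a Bailey pair relative to a = q. -/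
/-!
Clearing denominators with `(q;q)_{n-r} (q²;q)_{n+r} = (q;q)_{2n+1} / ((1 - q) [2n+1, n-r])`
turns the claim into `∑_r α_r [2n+1, n-r] = q^{n²}`, where `[N, k]` is the Gaussian binomial.
Grouping `r` by its residue mod 3 and using `[N, k] = [N, N - k]`, the left side becomes the
bilateral sum `O_n = ∑_{m ∈ ℤ} (q^{3m²-m} [2n+1, n-3m] - q^{3m²+m} [2n+1, n-3m-1])`.
Let `E_n` be the same sum with `2n` in place of `2n+1`, and
`X_n = ∑_m (q^{3m²+2m} [2n+1, n-3m] - q^{3m²+4m+1} [2n+1, n-3m-1])`.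
By the two q-Pascal rules, each of `O_n - E_n`, `E_{n+1} - q^{n+1} X_n` and `X_n - q^n E_n` is a
sum of `a m - a (σ m)` for a reflection `σ` of `ℤ` (`m ↦ -m` or `m ↦ -m - 1`), hence vanishes.
So `O_n = E_n = q^{n²}` by induction on `n`. The case `q = 0` is checked directly.
-/

open Finset

noncomputable def alphaS8 (q : ℂ) (n : ℕ) : ℂ :=
  if n % 3 = 0 then q ^ (3 * ((n : ℤ) / 3) ^ 2 - ((n : ℤ) / 3) : ℤ)
  else if n % 3 = 1 then -q ^ (3 * ((n : ℤ) / 3) ^ 2 + ((n : ℤ) / 3) : ℤ) - q ^ (3 * ((n : ℤ) / 3) ^ 2 + 5 * ((n : ℤ) / 3) + 2 : ℤ)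
  else q ^ (3 * (((n : ℤ) + 1) / 3) ^ 2 + (((n : ℤ) + 1) / 3) : ℤ)

open Function

lemma qPoch_self_succ (q : ℂ) (k : ℕ) : qPoch q q (k + 1) = qPoch q q k * (1 - q ^ (k + 1)) := by
  rw [qPoch, prod_range_succ, ← pow_succ']; rfl

lemma qPoch_succ_eq_one_sub_mul (a q : ℂ) (k : ℕ) :
    qPoch a q (k + 1) = (1 - a) * qPoch (a * q) q k := by
  simp only [qPoch, prod_range_succ', pow_zero, mul_one, pow_succ', mul_assoc]
  ring

lemma qPoch_ne_zero {a q : ℂ} (ha : ‖a‖ < 1) (hq : ‖q‖ ≤ 1) (k : ℕ) : qPoch a q k ≠ 0 :=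
  prod_ne_zero_iff.2 fun i _ h => by
    have hnorm : ‖a * q ^ i‖ < 1 := by
      rw [norm_mul, norm_pow]
      exact (mul_le_of_le_one_right (norm_nonneg a) (pow_le_one₀ (norm_nonneg q) hq)).trans_lt ha
    rw [← sub_eq_zero.1 h, norm_one] at hnorm
    exact hnorm.false

/-- The Gaussian binomial `[N, k]`, indexed by `k : ℤ` so that `k ↦ N - k` is total. -/
noncomputable def gaussBinom (q : ℂ) : ℕ → ℤ → ℂ
  | 0, k => if k = 0 then 1 else 0
  | N + 1, k => gaussBinom q N k + q ^ ((N : ℤ) + 1 - k) * gaussBinom q N (k - 1)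

section GaussBinom

variable {q : ℂ}

lemma gaussBinom_succ (N : ℕ) (k : ℤ) :
    gaussBinom q (N + 1) k = gaussBinom q N k + q ^ ((N : ℤ) + 1 - k) * gaussBinom q N (k - 1) :=
  rfl

lemma gaussBinom_of_neg (N : ℕ) {k : ℤ} (hk : k < 0) : gaussBinom q N k = 0 := by
  induction N generalizing k with
  | zero => simp [gaussBinom, hk.ne]
  | succ N ih => rw [gaussBinom_succ, ih hk, ih (by omega), mul_zero, add_zero]

lemma gaussBinom_of_lt {N : ℕ} {k : ℤ} (hk : N < k) : gaussBinom q N k = 0 := by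
  induction N generalizing k with
  | zero => simp only [gaussBinom, Nat.cast_zero] at hk ⊢; simp [hk.ne']
  | succ N ih =>
    push_cast at hk
    rw [gaussBinom_succ, ih (by omega), ih (by omega), mul_zero, add_zero]

lemma gaussBinom_zero_right (N : ℕ) : gaussBinom q N 0 = 1 := by
  induction N with
  | zero => simp [gaussBinom]
  | succ N ih => rw [gaussBinom_succ, ih, gaussBinom_of_neg N (by omega), mul_zero, add_zero]

lemma gaussBinom_self (N : ℕ) : gaussBinom q N N = 1 := by
  induction N with
  | zero => simp [gaussBinom]
  | succ N ih => simp [gaussBinom_succ, gaussBinom_of_lt, ih]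

lemma gaussBinom_succ' (hq : q ≠ 0) (N : ℕ) (k : ℤ) :
    gaussBinom q (N + 1) k = q ^ k * gaussBinom q N k + gaussBinom q N (k - 1) := by
  induction N generalizing k with
  | zero =>
    by_cases h0 : k = 0
    · simp [gaussBinom, h0]
    by_cases h1 : k = 1
    · simp [gaussBinom, h1]
    simp [gaussBinom, h0, h1, sub_eq_zero]
  | succ N ih =>
    have hpow : q ^ ((N : ℤ) + 1 + 1 - k) * q ^ (k - 1) = q ^ k * q ^ ((N : ℤ) + 1 - k) := by
      rw [← zpow_add₀ hq, ← zpow_add₀ hq]; ring_nf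
    conv_lhs => rw [gaussBinom_succ, ih k, ih (k - 1)]
    conv_rhs => rw [gaussBinom_succ N k, gaussBinom_succ N (k - 1)]
    push_cast
    linear_combination (norm := ring_nf) gaussBinom q N (k - 1) * hpow

lemma gaussBinom_symm (hq : q ≠ 0) (N : ℕ) (k : ℤ) : gaussBinom q N (N - k) = gaussBinom q N k := by
  induction N generalizing k with
  | zero => simp [gaussBinom]
  | succ N ih =>
    rw [gaussBinom_succ' hq, gaussBinom_succ, ← ih k, ← ih (k - 1)]
    push_cast
    ring_nf

lemma gaussBinom_mul_qPoch (j l : ℕ) :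
    gaussBinom q (j + l) j * (qPoch q q j * qPoch q q l) = qPoch q q (j + l) := by
  induction j generalizing l with
  | zero => simp [gaussBinom_zero_right, qPoch]
  | succ j ihj =>
    induction l with
    | zero => rw [add_zero, gaussBinom_self]; simp [qPoch]
    | succ l ihl =>
      have hpow : q ^ (((j + 1 + l : ℕ) : ℤ) + 1 - ((j + 1 : ℕ) : ℤ)) = q ^ (l + 1) := by
        rw [← zpow_natCast]; congr 1; push_cast; ring
      have ihj' := ihj (l + 1)
      rw [show j + 1 + (l + 1) = j + 1 + l + 1 by ring, gaussBinom_succ, hpow]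
      rw [qPoch_self_succ q j] at ihl
      rw [qPoch_self_succ q l] at ihj'
      rw [qPoch_self_succ q j, qPoch_self_succ q l, qPoch_self_succ q (j + 1 + l)]
      push_cast at ihl ⊢
      linear_combination (norm := ring_nf)
        (1 - q ^ (l + 1)) * ihl + q ^ (l + 1) * (1 - q ^ (j + 1)) * ihj'

end GaussBinom

lemma finsum_eq_of_sub_eq_sub_comp {α M : Type*} [AddCommGroup M] [IsAddTorsionFree M]
    {f g a : α → M} {e : α → α} (he : Involutive e) (hf : f.HasFiniteSupport)
    (hg : g.HasFiniteSupport) (h : ∀ x, f x - g x = a x - a (e x)) :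
    ∑ᶠ x, f x = ∑ᶠ x, g x := by
  have hodd : ∀ x, f (e x) - g (e x) = -(f x - g x) := fun x => by rw [h, h, he x, neg_sub]
  have hsum : ∑ᶠ x, (f x - g x) = -∑ᶠ x, (f x - g x) :=
    calc ∑ᶠ x, (f x - g x) = ∑ᶠ x, (f (e x) - g (e x)) :=
          (finsum_comp (g := fun x => f x - g x) e he.bijective).symm
      _ = -∑ᶠ x, (f x - g x) := by simp_rw [hodd, finsum_neg_distrib]
  rwa [self_eq_neg, finsum_sub_distrib hf hg, sub_eq_zero] at hsum

/-- In the notation of the header, `O_n = ∑ᶠ m, quintTerm q (2 * n + 1) n m`,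
`E_n = ∑ᶠ m, quintTerm q (2 * n) n m` and `X_n = ∑ᶠ m, quintTerm' q (2 * n + 1) n m`. -/
noncomputable def quintTerm (q : ℂ) (N : ℕ) (t m : ℤ) : ℂ :=
  q ^ (3 * m ^ 2 - m) * gaussBinom q N (t - 3 * m)
    - q ^ (3 * m ^ 2 + m) * gaussBinom q N (t - 3 * m - 1)

noncomputable def quintTerm' (q : ℂ) (N : ℕ) (t m : ℤ) : ℂ :=
  q ^ (3 * m ^ 2 + 2 * m) * gaussBinom q N (t - 3 * m)
    - q ^ (3 * m ^ 2 + 4 * m + 1) * gaussBinom q N (t - 3 * m - 1)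

section QuintSums

variable {q : ℂ}

lemma quintTerm_eq_zero {N : ℕ} {t m : ℤ} (h : t < 3 * m ∨ 3 * m + N + 1 < t) :
    quintTerm q N t m = 0 := by
  rcases h with h | h
  · rw [quintTerm, gaussBinom_of_neg N (by omega), gaussBinom_of_neg N (by omega)]; ring
  · rw [quintTerm, gaussBinom_of_lt (by omega), gaussBinom_of_lt (by omega)]; ring

lemma quintTerm'_eq_zero {N : ℕ} {t m : ℤ} (h : t < 3 * m ∨ 3 * m + N + 1 < t) :
    quintTerm' q N t m = 0 := by
  rcases h with h | h
  · rw [quintTerm', gaussBinom_of_neg N (by omega), gaussBinom_of_neg N (by omega)]; ring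
  · rw [quintTerm', gaussBinom_of_lt (by omega), gaussBinom_of_lt (by omega)]; ring

lemma hasFiniteSupport_of_eq_zero_outside {f : ℤ → ℂ} (N : ℕ) (t : ℤ)
    (h : ∀ m, t < 3 * m ∨ 3 * m + N + 1 < t → f m = 0) : f.HasFiniteSupport :=
  (Set.finite_Icc ((t - N - 1) / 3) (t / 3)).subset fun m hm => by
    by_contra hm'
    exact hm (h m (by simp only [Set.mem_Icc, not_and_or, not_le] at hm'; omega))

@[fun_prop]
lemma quintTerm_hasFiniteSupport (N : ℕ) (t : ℤ) : (quintTerm q N t).HasFiniteSupport :=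
  hasFiniteSupport_of_eq_zero_outside N t fun _ => quintTerm_eq_zero

@[fun_prop]
lemma quintTerm'_hasFiniteSupport (N : ℕ) (t : ℤ) : (quintTerm' q N t).HasFiniteSupport :=
  hasFiniteSupport_of_eq_zero_outside N t fun _ => quintTerm'_eq_zero

lemma finsum_quintTerm_two_mul_add_two (hq : q ≠ 0) (n : ℕ) :
    ∑ᶠ m, quintTerm q (2 * n + 1 + 1) (n + 1) m
      = q ^ (n + 1) * ∑ᶠ m, quintTerm' q (2 * n + 1) n m := by
  rw [mul_finsum, ← zpow_natCast]
  refine finsum_eq_of_sub_eq_sub_comp neg_involutive (by fun_prop) (by fun_prop)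
    (a := fun m => q ^ (3 * m ^ 2 - m) * gaussBinom q (2 * n + 1) (n + 1 - 3 * m)) fun m => ?_
  have e1 : q ^ (3 * m ^ 2 - m) * q ^ (((2 * n + 1 : ℕ) : ℤ) + 1 - (n + 1 - 3 * m))
      = q ^ ((n : ℤ) + 1) * q ^ (3 * m ^ 2 + 2 * m) := by
    rw [← zpow_add₀ hq, ← zpow_add₀ hq]; push_cast; ring_nf
  have e2 : q ^ (3 * m ^ 2 + m) * q ^ (((2 * n + 1 : ℕ) : ℤ) + 1 - (n + 1 - 3 * m - 1))
      = q ^ ((n : ℤ) + 1) * q ^ (3 * m ^ 2 + 4 * m + 1) := by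
    rw [← zpow_add₀ hq, ← zpow_add₀ hq]; push_cast; ring_nf
  rw [quintTerm, quintTerm', gaussBinom_succ (2 * n + 1), gaussBinom_succ (2 * n + 1),
    ← gaussBinom_symm hq _ (n + 1 - 3 * -m)]
  push_cast at e1 e2 ⊢
  linear_combination (norm := ring_nf)
    gaussBinom q (2 * n + 1) (n - 3 * m) * e1 - gaussBinom q (2 * n + 1) (n - 3 * m - 1) * e2

lemma finsum_quintTerm'_two_mul_add_one (hq : q ≠ 0) (n : ℕ) :
    ∑ᶠ m, quintTerm' q (2 * n + 1) n m = q ^ n * ∑ᶠ m, quintTerm q (2 * n) n m := by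
  rw [mul_finsum, ← zpow_natCast]
  refine finsum_eq_of_sub_eq_sub_comp (e := fun m => -m - 1) (fun m => by ring) (by fun_prop)
    (by fun_prop) (a := fun m => q ^ (3 * m ^ 2 + 2 * m) * gaussBinom q (2 * n) (n - 3 * m - 1))
    fun m => ?_
  have e1 : q ^ (3 * m ^ 2 + 2 * m) * q ^ ((n : ℤ) - 3 * m)
      = q ^ (n : ℤ) * q ^ (3 * m ^ 2 - m) := by
    rw [← zpow_add₀ hq, ← zpow_add₀ hq]; ring_nf
  have e2 : q ^ (3 * m ^ 2 + 4 * m + 1) * q ^ ((n : ℤ) - 3 * m - 1)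
      = q ^ (n : ℤ) * q ^ (3 * m ^ 2 + m) := by
    rw [← zpow_add₀ hq, ← zpow_add₀ hq]; ring_nf
  rw [quintTerm, quintTerm', gaussBinom_succ' hq, gaussBinom_succ' hq,
    ← gaussBinom_symm hq _ (n - 3 * (-m - 1) - 1)]
  push_cast
  linear_combination (norm := ring_nf)
    gaussBinom q (2 * n) (n - 3 * m) * e1 - gaussBinom q (2 * n) (n - 3 * m - 1) * e2

lemma finsum_quintTerm_two_mul_add_one (hq : q ≠ 0) (n : ℕ) :
    ∑ᶠ m, quintTerm q (2 * n + 1) n m = ∑ᶠ m, quintTerm q (2 * n) n m := by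
  refine finsum_eq_of_sub_eq_sub_comp (e := fun m => -m - 1) (fun m => by ring) (by fun_prop)
    (by fun_prop)
    (a := fun m => q ^ (3 * m ^ 2 + 2 * m + n + 1) * gaussBinom q (2 * n) (n - 3 * m - 1))
    fun m => ?_
  have e1 : q ^ (3 * m ^ 2 - m) * q ^ ((2 * n : ℤ) + 1 - (n - 3 * m))
      = q ^ (3 * m ^ 2 + 2 * m + n + 1) := by
    rw [← zpow_add₀ hq]; ring_nf
  have e2 : q ^ (3 * m ^ 2 + m) * q ^ ((2 * n : ℤ) + 1 - (n - 3 * m - 1))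
      = q ^ (3 * (-m - 1) ^ 2 + 2 * (-m - 1) + n + 1) := by
    rw [← zpow_add₀ hq]; ring_nf
  rw [quintTerm, quintTerm, gaussBinom_succ, gaussBinom_succ,
    ← gaussBinom_symm hq _ (n - 3 * (-m - 1) - 1)]
  push_cast at e1 e2 ⊢
  linear_combination (norm := ring_nf)
    gaussBinom q (2 * n) (n - 3 * m - 1) * e1 - gaussBinom q (2 * n) (n - 3 * m - 2) * e2

lemma finsum_quintTerm_two_mul (hq : q ≠ 0) (n : ℕ) :
    ∑ᶠ m, quintTerm q (2 * n) n m = q ^ (n ^ 2) := by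
  induction n with
  | zero =>
    rw [finsum_eq_single _ 0 fun m hm => quintTerm_eq_zero (by omega)]
    simp [quintTerm, gaussBinom]
  | succ n ih =>
    rw [show 2 * (n + 1) = 2 * n + 1 + 1 by ring, Nat.cast_succ,
      finsum_quintTerm_two_mul_add_two hq, finsum_quintTerm'_two_mul_add_one hq, ih]
    ring

end QuintSums

lemma sum_range_three_mul {M : Type*} [AddCommMonoid M] (f : ℕ → M) (K : ℕ) :
    ∑ r ∈ range (3 * K), f r = ∑ m ∈ range K, (f (3 * m) + f (3 * m + 1) + f (3 * m + 2)) := by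
  induction K with
  | zero => simp
  | succ K ih =>
    rw [show 3 * (K + 1) = 3 * K + 2 + 1 by ring, sum_range_succ, sum_range_succ, sum_range_succ,
      ih, sum_range_succ, add_assoc, add_assoc, add_assoc]

lemma finsum_int_eq_sum_range {M : Type*} [AddCommMonoid M] {g : ℤ → M} {K : ℕ}
    (hg : support g ⊆ Set.Ico (-K) K) : ∑ᶠ m, g m = ∑ m ∈ range K, (g m + g (-m - 1)) := by
  have hnonneg : ∑ m ∈ range K, g m = ∑ m ∈ Ico (0 : ℤ) K, g m :=
    sum_nbij' (↑) Int.toNat (by simp) (by simp; omega) (by simp) (by simp; omega) (by simp)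
  have hneg : ∑ m ∈ range K, g (-m - 1) = ∑ m ∈ Ico (-K : ℤ) 0, g m :=
    sum_nbij' (fun m => -m - 1) (fun m => (-m - 1).toNat) (by simp; omega) (by simp; omega)
      (by simp) (by simp; omega) (by simp)
  rw [sum_add_distrib, hnonneg, hneg, add_comm,
    ← sum_union (Ico_disjoint_Ico_consecutive _ _ _), Ico_union_Ico_eq_Ico (by omega) (by omega)]
  exact finsum_eq_finsetSum_of_support_subset g (by simpa using hg)

section Alpha

variable {q : ℂ}

lemma alphaS8_three_mul (m : ℕ) : alphaS8 q (3 * m) = q ^ (3 * (m : ℤ) ^ 2 - m) := by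
  rw [alphaS8, if_pos (by omega), show ((3 * m : ℕ) : ℤ) / 3 = m by omega]

lemma alphaS8_three_mul_add_one (m : ℕ) :
    alphaS8 q (3 * m + 1) = -q ^ (3 * (m : ℤ) ^ 2 + m) - q ^ (3 * (m : ℤ) ^ 2 + 5 * m + 2) := by
  rw [alphaS8, if_neg (by omega), if_pos (by omega), show ((3 * m + 1 : ℕ) : ℤ) / 3 = m by omega]

lemma alphaS8_three_mul_add_two (m : ℕ) :
    alphaS8 q (3 * m + 2) = q ^ (3 * ((m : ℤ) + 1) ^ 2 + (m + 1)) := by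
  rw [alphaS8, if_neg (by omega), if_neg (by omega),
    show ((3 * m + 2 : ℕ) + 1 : ℤ) / 3 = m + 1 by omega]

lemma sum_alphaS8_mul_gaussBinom (hq : q ≠ 0) (n : ℕ) :
    ∑ r ∈ range (n + 1), alphaS8 q r * gaussBinom q (2 * n + 1) (n - r)
      = ∑ᶠ m, quintTerm q (2 * n + 1) n m := by
  have hsupp : support (quintTerm q (2 * n + 1) n) ⊆ Set.Ico (-(n + 1 : ℕ)) (n + 1 : ℕ) :=
    fun m hm => by
      by_contra h
      simp only [Set.mem_Ico, not_and_or, not_le, not_lt] at h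
      exact hm (quintTerm_eq_zero (by omega))
  rw [sum_subset (range_subset_range.2 (by omega : n + 1 ≤ 3 * (n + 1))) fun r _ hr => by
      rw [gaussBinom_of_neg _ (by simp at hr; omega), mul_zero],
    sum_range_three_mul, finsum_int_eq_sum_range hsupp]
  refine sum_congr rfl fun m _ => ?_
  rw [alphaS8_three_mul, alphaS8_three_mul_add_one, alphaS8_three_mul_add_two, quintTerm, quintTerm,
    ← gaussBinom_symm hq _ (n - 3 * (-m - 1)), ← gaussBinom_symm hq _ (n - 3 * (-m - 1) - 1)]
  push_cast
  ring_nf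

end Alpha

lemma inv_qPoch_mul_qPoch_sq {q : ℂ} (hq : ‖q‖ < 1) (j l : ℕ) :
    (qPoch q q j * qPoch (q ^ 2) q l)⁻¹
      = (1 - q) / qPoch q q (j + l + 1) * gaussBinom q (j + l + 1) j := by
  have hsq : ‖q ^ 2‖ < 1 := by rw [norm_pow]; exact pow_lt_one₀ (norm_nonneg q) hq two_ne_zero
  have h := gaussBinom_mul_qPoch (q := q) j (l + 1)
  rw [qPoch_succ_eq_one_sub_mul, ← sq, ← add_assoc] at h
  field_simp [qPoch_ne_zero hq hq.le, qPoch_ne_zero hsq hq.le]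
  linear_combination -h

lemma alphaS8_zero_of_two_le {r : ℕ} (hr : 2 ≤ r) : alphaS8 0 r = 0 := by
  unfold alphaS8
  split_ifs
  · exact zero_zpow _ (by nlinarith [(by omega : 1 ≤ (r : ℤ) / 3)])
  · rw [zero_zpow _ (by nlinarith [(by omega : 1 ≤ (r : ℤ) / 3)]),
      zero_zpow _ (by nlinarith [(by omega : 1 ≤ (r : ℤ) / 3)]), neg_zero, sub_zero]
  · exact zero_zpow _ (by nlinarith [(by omega : 1 ≤ ((r : ℤ) + 1) / 3)])

lemma sum_range_alphaS8_zero (n : ℕ) : ∑ r ∈ range (n + 1), alphaS8 0 r = 0 ^ (n ^ 2) := by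
  cases n with
  | zero => simp [alphaS8]
  | succ n =>
    rw [sum_range_succ', sum_range_succ',
      sum_eq_zero fun r _ => alphaS8_zero_of_two_le (by omega)]
    simp [alphaS8]

theorem stmt8 (q : ℂ) (hq : ‖q‖ < 1) (n : ℕ) :
    q ^ (n ^ 2) / qPoch (q ^ 2) q (2 * n)
      = ∑ r ∈ Finset.range (n + 1), alphaS8 q r / (qPoch q q (n - r) * qPoch (q ^ 2) q (n + r)) := by
  rcases eq_or_ne q 0 with rfl | hq0
  · simp [qPoch, sum_range_alphaS8_zero]
  have hsummand : ∀ r ∈ range (n + 1), alphaS8 q r / (qPoch q q (n - r) * qPoch (q ^ 2) q (n + r))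
      = (1 - q) / qPoch q q (2 * n + 1) * (alphaS8 q r * gaussBinom q (2 * n + 1) (n - r)) := by
    intro r hr
    have hrn : r ≤ n := Nat.lt_succ_iff.1 (mem_range.1 hr)
    rw [div_eq_mul_inv, inv_qPoch_mul_qPoch_sq hq, show n - r + (n + r) + 1 = 2 * n + 1 by omega,
      Nat.cast_sub hrn]
    ring
  rw [sum_congr rfl hsummand, ← mul_sum, sum_alphaS8_mul_gaussBinom hq0,
    finsum_quintTerm_two_mul_add_one hq0, finsum_quintTerm_two_mul hq0,
    qPoch_succ_eq_one_sub_mul, ← sq]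
  have h1q : 1 - q ≠ 0 := sub_ne_zero.2 fun h => by simp [← h] at hq
  field_simp
end
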